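/- Let Y be a closed subspace of the real space c₀ that is δ-null, i.e. the norms of the restricted coordinate functionals satisfy ‖δₙ|_Y‖ → 0 as n → ∞, where δₙ(x) = x(n). Then every continuous linear operator T : Y → Y admits a continuous linear extension S : c₀ → c₀ with S y = T y for all y ∈ Y and ‖S‖ = ‖T‖. In particular (since every finite-dimensional subspace of c₀ is δ-null), c₀ has the finite self-extension property. -/

import Mathlib

open Filter
open scoped ENNReal

/-- The space `c₀` of real sequences converging to `0`, as a subspace of `ℓ∞` (so it carries
the supremum norm). -/
noncomputable def c0 : Submodule ℝ (lp (fun _ : ℕ => ℝ) ∞) where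
  carrier := {x | Tendsto (fun n => x n) atTop (nhds 0)}
  add_mem' := by
    intro a b ha hb
    simpa [lp.coeFn_add] using ha.add hb
  zero_mem' := by
    simp [lp.coeFn_zero, tendsto_const_nhds]
  smul_mem' := by
    intro c x hx
    simpa [lp.coeFn_smul, smul_eq_mul] using hx.const_mul c

/-- The `n`-th coordinate evaluation functional `δₙ` on `c₀`. -/
noncomputable def c0delta (n : ℕ) : c0 →L[ℝ] ℝ :=
  LinearMap.mkContinuous
    { toFun := fun y => (y : lp (fun _ : ℕ => ℝ) ∞) n
      map_add' := by intro a b; simp [lp.coeFn_add]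
      map_smul' := by intro c a; simp [lp.coeFn_smul]
    }
    1
    (fun y => by
      rw [one_mul]
      exact lp.norm_apply_le_norm ENNReal.top_ne_zero (y : lp (fun _ : ℕ => ℝ) ∞) n)

/-- A subspace `Y` of `c₀` is **`δ`-null** if the norms of the restricted coordinate
functionals `δₙ|_Y` tend to `0` as `n → ∞`. -/
def DeltaNull (Y : Submodule ℝ c0) : Prop :=
  Tendsto (fun n => ‖(c0delta n).comp Y.subtypeL‖) atTop (nhds 0)

/-- A Banach space `X` has the **finite self-extension property** if every continuous linear
operator on a finite-dimensional subspace of `X` extends to an operator on `X` with the same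
norm. -/
def FiniteSelfExt (X : Type*) [NormedAddCommGroup X] [NormedSpace ℝ X] : Prop :=
  ∀ (Y : Submodule ℝ X), FiniteDimensional ℝ Y → ∀ T : Y →L[ℝ] Y,
    ∃ S : X →L[ℝ] X, (∀ y : Y, S y = (T y : X)) ∧ ‖S‖ = ‖T‖

/-! Extend each coordinate functional `δₙ ∘ T` of `T` from `Y` to `c₀` by Hahn–Banach without
increasing its norm. Since `‖δₙ ∘ T‖ ≤ ‖δₙ|_Y‖ ‖T‖ → 0`, the extensions `fₙ` satisfy `fₙ x → 0` for
every `x`, so `x ↦ (fₙ x)ₙ` is an operator `S : c₀ → c₀` of norm at most `supₙ ‖fₙ‖ ≤ ‖T‖`; it extends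
`T`, hence `‖S‖ = ‖T‖`. A finite-dimensional `Y` is `δ`-null because on a finite-dimensional space
pointwise convergence `δₙ|_Y → 0` is convergence in norm. -/

open Topology

section FiniteDimensional

variable {𝕜 : Type*} [NontriviallyNormedField 𝕜] [CompleteSpace 𝕜]
  {E F : Type*} [SeminormedAddCommGroup E] [NormedSpace 𝕜 E] [T2Space E] [FiniteDimensional 𝕜 E]
  [SeminormedAddCommGroup F] [NormedSpace 𝕜 F]

theorem ContinuousLinearMap.tendsto_opNorm_zero_of_tendsto_apply {α : Type*} {l : Filter α}
    {u : α → E →L[𝕜] F} (h : ∀ x, Tendsto (fun a => u a x) l (𝓝 0)) :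
    Tendsto (fun a => ‖u a‖) l (𝓝 0) := by
  let b := Module.finBasis 𝕜 E
  let coord (i) : E →L[𝕜] 𝕜 := LinearMap.toContinuousLinearMap (b.coord i)
  have hbound (a) : ‖u a‖ ≤ ∑ i, ‖coord i‖ * ‖u a (b i)‖ := by
    refine (u a).opNorm_le_bound (by positivity) fun x => ?_
    have hx : u a x = ∑ i, coord i x • u a (b i) := by
      conv_lhs => rw [← b.sum_repr x]
      simp only [map_sum, map_smul, coord, LinearMap.coe_toContinuousLinearMap',
        Module.Basis.coord_apply]
    rw [hx, Finset.sum_mul]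
    refine norm_sum_le_of_le _ fun i _ => ?_
    rw [norm_smul, mul_right_comm]
    gcongr
    exact (coord i).le_opNorm x
  have hsum : Tendsto (fun a => ∑ i, ‖coord i‖ * ‖u a (b i)‖) l (𝓝 0) := by
    simpa using tendsto_finsetSum Finset.univ fun i _ => (h (b i)).norm.const_mul ‖coord i‖
  exact squeeze_zero (fun a => norm_nonneg _) hbound hsum

end FiniteDimensional

theorem c0_ext {x y : c0} (h : ∀ n, c0delta n x = c0delta n y) : x = y :=
  Subtype.ext (lp.ext (funext h))

theorem norm_c0delta_le (n : ℕ) : ‖c0delta n‖ ≤ 1 :=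
  LinearMap.mkContinuous_norm_le _ zero_le_one _

section OperatorsIntoC0

variable {E : Type*} [SeminormedAddCommGroup E] [NormedSpace ℝ E]

theorem exists_c0_operator_of_tendsto_norm (f : ℕ → E →L[ℝ] ℝ)
    (hf : Tendsto (fun n => ‖f n‖) atTop (𝓝 0)) {C : ℝ} (hC : ∀ n, ‖f n‖ ≤ C) :
    ∃ S : E →L[ℝ] c0, (∀ n x, c0delta n (S x) = f n x) ∧ ‖S‖ ≤ C := by
  have hC₀ : 0 ≤ C := (norm_nonneg _).trans (hC 0)
  have hbound : ∀ n x, ‖f n x‖ ≤ C * ‖x‖ := fun n x =>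
    ((f n).le_opNorm x).trans (mul_le_mul_of_nonneg_right (hC n) (norm_nonneg x))
  have hnull : ∀ x, Tendsto (fun n => f n x) atTop (𝓝 0) := fun x =>
    squeeze_zero_norm (fun n => (f n).le_opNorm x) (by simpa using hf.mul_const ‖x‖)
  have hmem : ∀ x, Memℓp (fun n => f n x) ∞ := fun x =>
    memℓp_infty ⟨C * ‖x‖, by rintro _ ⟨n, rfl⟩; exact hbound n x⟩
  let S : E →ₗ[ℝ] c0 :=
    { toFun := fun x => ⟨⟨fun n => f n x, hmem x⟩, hnull x⟩
      map_add' := fun x y => c0_ext fun n => map_add (f n) x y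
      map_smul' := fun c x => c0_ext fun n => map_smul (f n) c x }
  have hS : ∀ x, ‖S x‖ ≤ C * ‖x‖ := fun x =>
    lp.norm_le_of_forall_le (by positivity) fun n => hbound n x
  exact ⟨S.mkContinuous C hS, fun n x => rfl, S.mkContinuous_norm_le hC₀ hS⟩

theorem exists_c0_operator_extending_of_tendsto_norm (Y : Submodule ℝ E) (g : ℕ → Y →L[ℝ] ℝ)
    (hg : Tendsto (fun n => ‖g n‖) atTop (𝓝 0)) {C : ℝ} (hC : ∀ n, ‖g n‖ ≤ C) :
    ∃ S : E →L[ℝ] c0, (∀ n (y : Y), c0delta n (S y) = g n y) ∧ ‖S‖ ≤ C := by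
  choose f hf_ext hf_norm using fun n => exists_extension_norm_eq Y (g n)
  obtain ⟨S, hS_coord, hS_norm⟩ := exists_c0_operator_of_tendsto_norm f
    (by simpa only [hf_norm] using hg) (fun n => (hf_norm n).trans_le (hC n))
  exact ⟨S, fun n y => (hS_coord n y).trans (hf_ext n y), hS_norm⟩

end OperatorsIntoC0

section SubspacesOfC0

/-- `DeltaNull Y` and `‖T‖` for `T : Y →L[ℝ] Y` norm `Y` through the `NormedAddCommGroup` structure
of `c₀` as an additive subgroup of `ℓ∞`. Instance search builds `NormedSpace ℝ Y` only over
`c0.seminormedAddCommGroup`, which is not reducibly defeq to it, so without this instance neither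
Hahn–Banach nor finite-dimensional analysis applies to `Y`. -/
noncomputable local instance c0.submoduleNormedSpace (Y : Submodule ℝ c0) :
    @NormedSpace ℝ Y _ (@Submodule.seminormedAddCommGroup ℝ c0 _
      (@NormedAddCommGroup.toSeminormedAddCommGroup c0 (@AddSubgroupClass.normedAddCommGroup _ _ _ _
        (@Submodule.addSubgroupClass ℝ _ NormedRing.toRing _ _) c0)) _ Y) where
  norm_smul_le c x := norm_smul_le c (x : c0)

theorem deltaNull_of_finiteDimensional (Y : Submodule ℝ c0) [FiniteDimensional ℝ Y] :
    DeltaNull Y := by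
  apply ContinuousLinearMap.tendsto_opNorm_zero_of_tendsto_apply
  intro y
  exact (y : c0).2

theorem DeltaNull.exists_extension_norm_eq {Y : Submodule ℝ c0} (hY : DeltaNull Y)
    (T : Y →L[ℝ] Y) : ∃ S : c0 →L[ℝ] c0, (∀ y : Y, S y = (T y : c0)) ∧ ‖S‖ = ‖T‖ := by
  let g (n : ℕ) := ((c0delta n).comp Y.subtypeL).comp T
  have hg_le (n : ℕ) : ‖g n‖ ≤ ‖(c0delta n).comp Y.subtypeL‖ * ‖T‖ :=
    ContinuousLinearMap.opNorm_comp_le _ _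
  have hδ (n : ℕ) : ‖(c0delta n).comp Y.subtypeL‖ ≤ 1 :=
    (ContinuousLinearMap.opNorm_comp_le _ _).trans
      (mul_le_one₀ (norm_c0delta_le n) (ContinuousLinearMap.opNorm_nonneg _)
        (Submodule.norm_subtypeL_le Y))
  obtain ⟨S, hS_coord, hS_norm⟩ := exists_c0_operator_extending_of_tendsto_norm Y g
    (squeeze_zero (fun n => ContinuousLinearMap.opNorm_nonneg _) hg_le
      (by simpa using hY.mul_const ‖T‖))
    (fun n => (hg_le n).trans (mul_le_of_le_one_left (norm_nonneg T) (hδ n)))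
  have hext (y : Y) : S y = T y := c0_ext fun n => hS_coord n y
  refine ⟨S, hext, le_antisymm hS_norm (T.opNorm_le_bound (norm_nonneg S) fun y => ?_)⟩
  exact (congrArg norm (hext y)).symm.trans_le (S.le_opNorm y)

end SubspacesOfC0

/-- Every continuous linear operator on a closed `δ`-null subspace of `c₀` extends to an
operator on `c₀` with the same norm; in particular (as every finite-dimensional subspace of
`c₀` is `δ`-null), `c₀` has the finite self-extension property. -/
theorem c0_deltaNull_extension :
    (∀ Y : Submodule ℝ c0, IsClosed (Y : Set c0) → DeltaNull Y → ∀ T : Y →L[ℝ] Y,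
      ∃ S : c0 →L[ℝ] c0, (∀ y : Y, S y = (T y : c0)) ∧ ‖S‖ = ‖T‖) ∧
    FiniteSelfExt c0 :=
  ⟨fun _ _ hY T => hY.exists_extension_norm_eq T,
    fun Y _ T => (deltaNull_of_finiteDimensional Y).exists_extension_norm_eq T⟩
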